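/- arXiv:2505.18439 — 3 statements merged into one kernel-verified Lean document; each statement's English description precedes it below -/
import Mathlib

section
/- Let λ₁ ∈ ℝ, ε > 0, and let g : (0,ε) → ℝ be a twice continuously differentiable solution of g″ + H·g′ + λ₁·g = 0 on (0,ε) with g(r) → 1 as r → 0⁺. Then (g(r) − 1)/r² → −λ₁/(2kn) as r → 0⁺; that is, g(r) = 1 − (λ₁/(2kn))·r² + o(r²) at r = 0. -/
/-!
With `ρ = sinh ^ (kn-1) * cosh ^ (k-1)` one has `ρ' = H ρ`, so the equation reads
`(ρ g')' = -λ₁ ρ g`. The right-hand side tends to `0`, so the flux `ρ g'` has a limit `L` at `0⁺`.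
As `ρ r ~ r ^ (kn-1)`, a nonzero `L` would keep `|r g'(r)|` away from `0`, which the mean value
theorem on `[r/2, r]` forbids because `g` converges. Hence `L = 0`, and two applications of
l'Hôpital's rule give `ρ g' / r ^ (kn) → -λ₁ / (kn)` and then `(g - 1) / r² → -λ₁ / (2kn)`.
-/

open Filter Set Topology Real

theorem exists_tendsto_nhdsGT_of_tendsto_deriv {f f' : ℝ → ℝ} {a l : ℝ}
    (hf : ∀ᶠ x in 𝓝[>] a, HasDerivAt f (f' x) x) (hf' : Tendsto f' (𝓝[>] a) (𝓝 l)) :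
    ∃ L, Tendsto f (𝓝[>] a) (𝓝 L) := by
  have hbound : ∀ᶠ x in 𝓝[>] a, ‖f' x‖₊ ≤ ‖l‖₊ + 1 :=
    (hf'.nnnorm.eventually (gt_mem_nhds (lt_add_one ‖l‖₊))).mono fun _ ↦ le_of_lt
  obtain ⟨b, hab, hb⟩ := mem_nhdsGT_iff_exists_Ioo_subset.mp (hf.and hbound)
  have hlip : LipschitzOnWith (‖l‖₊ + 1) f (Ioo a b) :=
    (convex_Ioo a b).lipschitzOnWith_of_nnnorm_hasDerivWithin_le
      (fun x hx ↦ (hb hx).1.hasDerivWithinAt) fun x hx ↦ (hb hx).2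
  have hle : 𝓝[>] a ≤ 𝓟 (Ioo a b) := by
    rw [← nhdsWithin_Ioo_eq_nhdsGT hab]
    exact inf_le_right
  exact cauchy_map_iff_exists_tendsto.mp
    ((cauchy_nhds.mono nhdsWithin_le_nhds).map_of_le hlip.uniformContinuousOn hle)

theorem frequently_abs_mul_deriv_lt {f f' : ℝ → ℝ} {a δ : ℝ}
    (hf : ∀ᶠ x in 𝓝[>] 0, HasDerivAt f (f' x) x) (hlim : Tendsto f (𝓝[>] 0) (𝓝 a))
    (hδ : 0 < δ) : ∃ᶠ x in 𝓝[>] 0, |x * f' x| < δ := by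
  intro hge
  simp only [not_lt] at hge
  obtain ⟨c, hc, hcf⟩ := mem_nhdsGT_iff_exists_Ioo_subset.mp (hf.and hge)
  have hhalf : Tendsto (fun x : ℝ ↦ x / 2) (𝓝[>] 0) (𝓝[>] 0) :=
    ((continuous_id.div_const 2).tendsto' 0 0 (zero_div 2)).inf
      (tendsto_principal_principal.mpr fun x (hx : 0 < x) ↦ half_pos hx)
  have hdiff : Tendsto (fun x ↦ f x - f (x / 2)) (𝓝[>] 0) (𝓝 0) := by
    simpa using hlim.sub (hlim.comp hhalf)
  obtain ⟨x, hxδ, hx⟩ := ((hdiff.eventually (Metric.ball_mem_nhds 0 (half_pos hδ))).and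
    (Ioo_mem_nhdsGT hc)).exists
  have hx0 : 0 < x := hx.1
  obtain ⟨ξ, hξ, hslope⟩ := exists_hasDerivAt_eq_slope f f' (half_lt_self hx0)
    (fun y hy ↦ (hcf ⟨by linarith [hy.1], hy.2.trans_lt hx.2⟩).1.continuousAt.continuousWithinAt)
    (fun y hy ↦ (hcf ⟨by linarith [hy.1], hy.2.trans hx.2⟩).1)
  have hξδ := (hcf ⟨by linarith [hξ.1], hξ.2.trans hx.2⟩).2
  have hsmall : |ξ * f' ξ| < δ := by
    have hd : |f x - f (x / 2)| < δ / 2 := by simpa [Real.dist_eq] using hxδ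
    have hratio : |ξ / (x / 2)| < 2 := by
      rw [abs_of_pos (div_pos (by linarith [hξ.1]) (by linarith)), div_lt_iff₀ (by linarith)]
      linarith [hξ.2]
    calc |ξ * f' ξ| = |ξ / (x / 2)| * |f x - f (x / 2)| := by
          rw [hslope, ← abs_mul]; ring_nf
      _ < δ := by nlinarith [abs_nonneg (ξ / (x / 2)), abs_nonneg (f x - f (x / 2))]
  exact (hξδ.trans_lt hsmall).false

theorem eq_zero_of_tendsto_pow_mul_deriv {f f' : ℝ → ℝ} {a L : ℝ} {p : ℕ} (hp : 1 ≤ p)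
    (hf : ∀ᶠ x in 𝓝[>] 0, HasDerivAt f (f' x) x) (hlim : Tendsto f (𝓝[>] 0) (𝓝 a))
    (hL : Tendsto (fun x ↦ x ^ p * f' x) (𝓝[>] 0) (𝓝 L)) : L = 0 := by
  by_contra hL0
  have hbig : ∀ᶠ x in 𝓝[>] 0, |L| / 2 ≤ |x * f' x| := by
    filter_upwards [hL.abs.eventually (lt_mem_nhds (half_lt_self (abs_pos.mpr hL0))),
      Ioo_mem_nhdsGT one_pos] with x hx hx1
    calc |L| / 2 ≤ |x ^ p * f' x| := hx.le
      _ ≤ |x * f' x| := by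
        rw [abs_mul, abs_mul, abs_of_pos hx1.1, abs_of_pos (pow_pos hx1.1 p)]
        gcongr
        exact pow_le_of_le_one hx1.1.le hx1.2.le (by omega)
  exact frequently_abs_mul_deriv_lt hf hlim (half_pos (abs_pos.mpr hL0))
    (hbig.mono fun x hx ↦ not_lt.mpr hx)

theorem tendsto_pow_nhdsGT_zero {p : ℕ} (hp : p ≠ 0) :
    Tendsto (fun r : ℝ ↦ r ^ p) (𝓝[>] 0) (𝓝 0) := by
  simpa [zero_pow hp] using ((continuous_pow p).tendsto (0 : ℝ)).mono_left nhdsWithin_le_nhds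

theorem tendsto_sub_one_div_sq_of_radial_ode {ρ H g g' g'' : ℝ → ℝ} {lam : ℝ} {p : ℕ}
    (hp : 1 ≤ p) (hρ : Tendsto (fun r ↦ ρ r / r ^ p) (𝓝[>] 0) (𝓝 1))
    (hρd : ∀ᶠ r in 𝓝[>] 0, HasDerivAt ρ (H r * ρ r) r)
    (hgd : ∀ᶠ r in 𝓝[>] 0, HasDerivAt g (g' r) r)
    (hgd' : ∀ᶠ r in 𝓝[>] 0, HasDerivAt g' (g'' r) r)
    (hode : ∀ᶠ r in 𝓝[>] 0, g'' r + H r * g' r + lam * g r = 0)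
    (hg : Tendsto g (𝓝[>] 0) (𝓝 1)) :
    Tendsto (fun r ↦ (g r - 1) / r ^ 2) (𝓝[>] 0) (𝓝 (-(lam / (2 * (p + 1))))) := by
  have hpos : ∀ᶠ r : ℝ in 𝓝[>] 0, 0 < r := self_mem_nhdsWithin
  have hρ_ne : ∀ᶠ r in 𝓝[>] 0, ρ r ≠ 0 :=
    (hρ.eventually_ne one_ne_zero).mono fun r hr h ↦ hr (by simp [h])
  have hρ_inv : Tendsto (fun r ↦ r ^ p / ρ r) (𝓝[>] 0) (𝓝 1) := by
    simpa using hρ.inv₀ one_ne_zero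
  have hflux_deriv : ∀ᶠ r in 𝓝[>] 0,
      HasDerivAt (fun r ↦ ρ r * g' r) (-lam * (ρ r * g r)) r := by
    filter_upwards [hρd, hgd', hode] with r hρr hg'r hoder
    exact (hρr.fun_mul hg'r).congr_deriv (by linear_combination ρ r * hoder)
  have hρg : Tendsto (fun r ↦ ρ r * g r / r ^ p) (𝓝[>] 0) (𝓝 1) := by
    simpa [mul_div_right_comm] using hρ.mul hg
  have hρg_zero : Tendsto (fun r ↦ ρ r * g r) (𝓝[>] 0) (𝓝 0) := by
    have := hρg.mul (tendsto_pow_nhdsGT_zero (p := p) (by omega))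
    rw [one_mul] at this
    refine this.congr' ?_
    filter_upwards [hpos] with r hr
    field_simp
  obtain ⟨L, hL⟩ := exists_tendsto_nhdsGT_of_tendsto_deriv hflux_deriv
    (by simpa using hρg_zero.const_mul (-lam))
  have hL0 : L = 0 := by
    refine eq_zero_of_tendsto_pow_mul_deriv hp hgd hg ?_
    have := hL.mul hρ_inv
    rw [mul_one] at this
    refine this.congr' ?_
    filter_upwards [hρ_ne] with r hr
    field_simp
  subst hL0
  have hflux : Tendsto (fun r ↦ ρ r * g' r / r ^ (p + 1)) (𝓝[>] 0) (𝓝 (-lam / (p + 1))) := by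
    refine HasDerivAt.lhopital_zero_nhdsGT hflux_deriv
      (Eventually.of_forall fun r ↦ hasDerivAt_pow (p + 1) r) ?_ hL
      (tendsto_pow_nhdsGT_zero (Nat.succ_ne_zero p)) ?_
    · filter_upwards [hpos] with r hr
      positivity
    · have := hρg.const_mul (-lam / (p + 1))
      rw [mul_one] at this
      refine this.congr' ?_
      filter_upwards [hpos] with r hr
      push_cast
      field_simp
  refine HasDerivAt.lhopital_zero_nhdsGT (hgd.mono fun r hr ↦ hr.sub_const 1)
    (Eventually.of_forall fun r ↦ hasDerivAt_pow 2 r) ?_ ?_ (tendsto_pow_nhdsGT_zero two_ne_zero) ?_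
  · filter_upwards [hpos] with r hr
    positivity
  · simpa using hg.sub_const 1
  · have := (hflux.mul hρ_inv).div_const 2
    rw [mul_one, div_div, mul_comm _ (2 : ℝ), neg_div] at this
    refine this.congr' ?_
    filter_upwards [hpos, hρ_ne] with r hr hρr
    field_simp
    ring

theorem hasDerivAt_sinh_pow_mul_cosh_pow (p q : ℕ) {r : ℝ} (hr : r ≠ 0) :
    HasDerivAt (fun t ↦ sinh t ^ p * cosh t ^ q)
      ((p * (cosh r / sinh r) + q * tanh r) * (sinh r ^ p * cosh r ^ q)) r := by
  have hs : sinh r ≠ 0 := sinh_ne_zero.mpr hr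
  have hc : cosh r ≠ 0 := (cosh_pos r).ne'
  refine (((hasDerivAt_sinh r).pow p).mul ((hasDerivAt_cosh r).pow q)).congr_deriv ?_
  rw [tanh_eq_sinh_div_cosh]
  rcases p with _ | p <;> rcases q with _ | q <;> simp [pow_succ] <;> field_simp

theorem tendsto_sinh_div_self : Tendsto (fun r ↦ sinh r / r) (𝓝[≠] 0) (𝓝 1) := by
  have := (hasDerivAt_sinh 0).tendsto_slope
  rw [cosh_zero] at this
  exact this.congr fun r ↦ by simp [slope_def_field]

theorem tendsto_sinh_pow_mul_cosh_pow_div_pow (p q : ℕ) :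
    Tendsto (fun r ↦ sinh r ^ p * cosh r ^ q / r ^ p) (𝓝[≠] 0) (𝓝 1) := by
  have hcosh : Tendsto cosh (𝓝[≠] 0) (𝓝 1) :=
    (continuous_cosh.tendsto' 0 1 cosh_zero).mono_left nhdsWithin_le_nhds
  simpa [div_pow, mul_div_right_comm] using (tendsto_sinh_div_self.pow p).mul (hcosh.pow q)

theorem stmt_4_general
    (k n : ℕ) (hk : k = 2 ∨ k = 4 ∨ k = 8) (hn : 2 ≤ n)
    (H : ℝ → ℝ)
    (hH : ∀ r : ℝ, 0 < r →
      H r = ((k : ℝ) * n - 1) * (Real.cosh r / Real.sinh r) + ((k : ℝ) - 1) * Real.tanh r)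
    (lam1 ε : ℝ) (hε : 0 < ε)
    (g g' g'' : ℝ → ℝ)
    (hgd : ∀ r ∈ Set.Ioo (0 : ℝ) ε, HasDerivAt g (g' r) r)
    (hgd' : ∀ r ∈ Set.Ioo (0 : ℝ) ε, HasDerivAt g' (g'' r) r)
    (hgode : ∀ r ∈ Set.Ioo (0 : ℝ) ε, g'' r + H r * g' r + lam1 * g r = 0)
    (hglim : Filter.Tendsto g (nhdsWithin 0 (Set.Ioi 0)) (nhds 1)) :
    Filter.Tendsto (fun r => (g r - 1) / r ^ 2) (nhdsWithin 0 (Set.Ioi 0))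
      (nhds (-(lam1 / (2 * ((k : ℝ) * n))))) := by
  have hk1 : 1 ≤ k := by rcases hk with rfl | rfl | rfl <;> norm_num
  have hkn : 2 ≤ k * n := by nlinarith
  have hIoo : ∀ᶠ r in 𝓝[>] 0, r ∈ Ioo 0 ε := Ioo_mem_nhdsGT hε
  have hρd : ∀ᶠ r in 𝓝[>] 0, HasDerivAt (fun t ↦ sinh t ^ (k * n - 1) * cosh t ^ (k - 1))
      (H r * (sinh r ^ (k * n - 1) * cosh r ^ (k - 1))) r := by
    filter_upwards [self_mem_nhdsWithin] with r (hr : 0 < r)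
    convert hasDerivAt_sinh_pow_mul_cosh_pow (k * n - 1) (k - 1) hr.ne' using 2
    rw [hH r hr]
    push_cast [Nat.cast_sub hk1, Nat.cast_sub (show 1 ≤ k * n by omega)]
    ring
  have := tendsto_sub_one_div_sq_of_radial_ode (by omega)
    ((tendsto_sinh_pow_mul_cosh_pow_div_pow _ _).mono_left (nhdsGT_le_nhdsNE 0)) hρd
    (hIoo.mono hgd) (hIoo.mono hgd') (hIoo.mono hgode) hglim
  convert this using 4
  push_cast [Nat.cast_sub (show 1 ≤ k * n by omega)]
  ring

/-- Asymptotic expansion at r = 0 of a bounded solution of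
g″ + H·g′ + λ₁·g = 0 with g(r) → 1 as r → 0⁺:
(g(r) − 1)/r² → −λ₁/(2kn), i.e. g(r) = 1 − (λ₁/(2kn))·r² + o(r²). -/
theorem stmt_4
    (k n : ℕ) (hk : k = 2 ∨ k = 4 ∨ k = 8) (hn : 2 ≤ n) (hk8 : k = 8 → n = 2)
    (H : ℝ → ℝ)
    (hH : ∀ r : ℝ, 0 < r →
      H r = ((k : ℝ) * n - 1) * (Real.cosh r / Real.sinh r) + ((k : ℝ) - 1) * Real.tanh r)
    (lam1 ε : ℝ) (hε : 0 < ε)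
    (g g' g'' : ℝ → ℝ)
    (hgd : ∀ r ∈ Set.Ioo (0 : ℝ) ε, HasDerivAt g (g' r) r)
    (hgd' : ∀ r ∈ Set.Ioo (0 : ℝ) ε, HasDerivAt g' (g'' r) r)
    (hgc : ContinuousOn g'' (Set.Ioo 0 ε))
    (hgode : ∀ r ∈ Set.Ioo (0 : ℝ) ε, g'' r + H r * g' r + lam1 * g r = 0)
    (hglim : Filter.Tendsto g (nhdsWithin 0 (Set.Ioi 0)) (nhds 1)) :
    Filter.Tendsto (fun r => (g r - 1) / r ^ 2) (nhdsWithin 0 (Set.Ioi 0))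
      (nhds (-(lam1 / (2 * ((k : ℝ) * n))))) :=
  stmt_4_general k n hk hn H hH lam1 ε hε g g' g'' hgd hgd' hgode hglim
end

section
/- λ₂ − λ₁ ≥ Λ(R): the gap between the first two Dirichlet eigenvalues of a geodesic ball of radius R in 𝕂ℍⁿ is at least the first nonzero Laplace eigenvalue Λ(R) of its boundary sphere. -/
/-!
With `ρ = sinh^(kn-1) cosh^(k-1)` one has `ρ' = ρ H`, so the two radial equations are in
Sturm–Liouville form `(ρ g')' + q ρ g = 0`, and the weighted Wronskian
`F = ρ (g₂' g₁ - g₁' g₂)` satisfies `F' = ρ (λ₁ - λ₂ + Λ) g₁ g₂`.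
If `Λ(R) > λ₂ - λ₁`, then, `Λ` being decreasing, `F' > 0` on `(0, R)`.
But `F → 0` at `0⁺` (since `ρ → 0` while the Wronskian tends to `1`) and `F(R) = 0`
(both `gᵢ` vanish at `R`), which is impossible for a strictly increasing function.
-/

open Real Set Filter Topology

noncomputable def sinhCoshWeight (a b r : ℝ) : ℝ := sinh r ^ a * cosh r ^ b

lemma sinhCoshWeight_pos (a b : ℝ) {r : ℝ} (hr : 0 < r) : 0 < sinhCoshWeight a b r :=
  mul_pos (rpow_pos_of_pos (sinh_pos_iff.mpr hr) a) (rpow_pos_of_pos (cosh_pos r) b)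

lemma hasDerivAt_sinhCoshWeight (a b : ℝ) {r : ℝ} (hr : 0 < r) :
    HasDerivAt (sinhCoshWeight a b)
      (sinhCoshWeight a b r * (a * (cosh r / sinh r) + b * tanh r)) r := by
  have hs : sinh r ≠ 0 := (sinh_pos_iff.mpr hr).ne'
  have hc : cosh r ≠ 0 := (cosh_pos r).ne'
  refine (((hasDerivAt_sinh r).rpow_const (p := a) (Or.inl hs)).mul
    ((hasDerivAt_cosh r).rpow_const (p := b) (Or.inl hc))).congr_deriv ?_
  rw [sinhCoshWeight, tanh_eq_sinh_div_cosh, rpow_sub_one hs, rpow_sub_one hc]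
  field_simp

lemma tendsto_sinhCoshWeight_zero {a : ℝ} (ha : 0 < a) (b : ℝ) :
    Tendsto (sinhCoshWeight a b) (𝓝 0) (𝓝 0) := by
  have hcont : ContinuousAt (sinhCoshWeight a b) 0 :=
    ((continuousAt_rpow_const _ a (Or.inr ha.le)).comp continuous_sinh.continuousAt).mul
      ((continuousAt_rpow_const _ b (Or.inl (cosh_pos 0).ne')).comp
        continuous_cosh.continuousAt)
  simpa [sinhCoshWeight, zero_rpow ha.ne'] using hcont.tendsto

/-- `(a - b) / u + b / (u (u + 1))`, with `u = sinh² r`, exhibits both terms as decreasing. -/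
lemma antitoneOn_div_sinh_sq_sub_div_cosh_sq {a b : ℝ} (hb : 0 ≤ b) (hab : b ≤ a) :
    AntitoneOn (fun r => a / sinh r ^ 2 - b / cosh r ^ 2) (Ioi 0) := by
  have split : ∀ u : ℝ, 0 < u → a / u - b / (u + 1) = (a - b) / u + b / (u * (u + 1)) := by
    intro u hu
    field_simp
    ring
  intro r hr t _ hrt
  have hsr : 0 < sinh r ^ 2 := pow_pos (sinh_pos_iff.mpr hr) 2
  have hsrt : sinh r ^ 2 ≤ sinh t ^ 2 :=
    pow_le_pow_left₀ (sinh_pos_iff.mpr hr).le (sinh_le_sinh.mpr hrt) 2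
  simp only [cosh_sq, split _ hsr, split _ (hsr.trans_le hsrt)]
  gcongr

lemma hasDerivAt_weighted_wronskian {ρ g₁ g₁' g₂ g₂' : ℝ → ℝ} {x h q₁ q₂ g₁'' g₂'' : ℝ}
    (hρ : HasDerivAt ρ (ρ x * h) x)
    (hg₁ : HasDerivAt g₁ (g₁' x) x) (hg₁' : HasDerivAt g₁' g₁'' x)
    (hg₂ : HasDerivAt g₂ (g₂' x) x) (hg₂' : HasDerivAt g₂' g₂'' x)
    (ode₁ : g₁'' + h * g₁' x + q₁ * g₁ x = 0) (ode₂ : g₂'' + h * g₂' x + q₂ * g₂ x = 0) :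
    HasDerivAt (fun r => ρ r * (g₂' r * g₁ r - g₁' r * g₂ r))
      (ρ x * ((q₁ - q₂) * (g₁ x * g₂ x))) x := by
  refine (hρ.mul ((hg₂'.mul hg₁).sub (hg₁'.mul hg₂))).congr_deriv ?_
  simp only [Pi.sub_apply, Pi.mul_apply]
  linear_combination (ρ x * g₁ x) * ode₂ - (ρ x * g₂ x) * ode₁

lemma tendsto_zero_of_tendsto_div_self {f : ℝ → ℝ} {c : ℝ}
    (hf : Tendsto (fun r => f r / r) (𝓝[>] 0) (𝓝 c)) : Tendsto f (𝓝[>] 0) (𝓝 0) := by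
  have hid : Tendsto (fun r : ℝ => r) (𝓝[>] 0) (𝓝 0) :=
    tendsto_nhdsWithin_of_tendsto_nhds tendsto_id
  have hprod := hf.mul hid
  rw [mul_zero] at hprod
  refine hprod.congr' ?_
  filter_upwards [self_mem_nhdsWithin] with r hr
  exact div_mul_cancel₀ (f r) (ne_of_gt hr)

lemma StrictMonoOn.pos_of_tendsto_nhdsGT_zero {F : ℝ → ℝ} {R : ℝ} (hR : 0 < R)
    (hF : StrictMonoOn F (Ioc 0 R)) (hF0 : Tendsto F (𝓝[>] 0) (𝓝 0)) : 0 < F R := by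
  have hhalf : R / 2 ∈ Ioc 0 R := ⟨by positivity, by linarith⟩
  have hle : ∀ᶠ s in 𝓝[>] 0, F s ≤ F (R / 2) := by
    filter_upwards [Ioc_mem_nhdsGT hhalf.1] with s hs
    exact hF.monotoneOn ⟨hs.1, hs.2.trans hhalf.2⟩ hhalf hs.2
  exact (le_of_tendsto hF0 hle).trans_lt (hF hhalf (right_mem_Ioc.mpr hR) (by linarith))

theorem stmt_6_general
    (k n : ℕ) (hk : k = 2 ∨ k = 4 ∨ k = 8) (hn : 2 ≤ n)
    (H : ℝ → ℝ)
    (hH : ∀ r : ℝ, 0 < r →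
      H r = ((k : ℝ) * n - 1) * (Real.cosh r / Real.sinh r) + ((k : ℝ) - 1) * Real.tanh r)
    (R lam1 : ℝ) (hR : 0 < R)
    (g₁ g₁' g₁'' : ℝ → ℝ)
    (hg₁d : ∀ r : ℝ, 0 < r → HasDerivAt g₁ (g₁' r) r)
    (hg₁d' : ∀ r : ℝ, 0 < r → HasDerivAt g₁' (g₁'' r) r)
    (hg₁ode : ∀ r : ℝ, 0 < r → g₁'' r + H r * g₁' r + lam1 * g₁ r = 0)
    (hg₁pos : ∀ r ∈ Set.Ioo (0 : ℝ) R, 0 < g₁ r)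
    (hg₁R : g₁ R = 0)
    (hg₁lim : Filter.Tendsto g₁ (nhdsWithin 0 (Set.Ioi 0)) (nhds 1))
    (hg₁'lim : Filter.Tendsto g₁' (nhdsWithin 0 (Set.Ioi 0)) (nhds 0))
    (Λ : ℝ → ℝ)
    (hΛ : ∀ r : ℝ, 0 < r →
      Λ r = ((k : ℝ) * n - 1) / Real.sinh r ^ 2 - ((k : ℝ) - 1) / Real.cosh r ^ 2)
    (lam2 : ℝ)
    (g₂ g₂' g₂'' : ℝ → ℝ)
    (hg₂d : ∀ r : ℝ, 0 < r → HasDerivAt g₂ (g₂' r) r)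
    (hg₂d' : ∀ r : ℝ, 0 < r → HasDerivAt g₂' (g₂'' r) r)
    (hg₂ode : ∀ r : ℝ, 0 < r → g₂'' r + H r * g₂' r + (lam2 - Λ r) * g₂ r = 0)
    (hg₂pos : ∀ r ∈ Set.Ioo (0 : ℝ) R, 0 < g₂ r)
    (hg₂R : g₂ R = 0)
    (hg₂lim : Filter.Tendsto (fun r => g₂ r / r) (nhdsWithin 0 (Set.Ioi 0)) (nhds 1))
    (hg₂'lim : Filter.Tendsto g₂' (nhdsWithin 0 (Set.Ioi 0)) (nhds 1)) :
    Λ R ≤ lam2 - lam1 := by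
  by_contra! hgap
  have hk2 : (2 : ℝ) ≤ k := by rcases hk with h | h | h <;> norm_num [h]
  have hn2 : (2 : ℝ) ≤ n := by exact_mod_cast hn
  have ha : 0 < (k : ℝ) * n - 1 := by nlinarith
  have hab : (k : ℝ) - 1 ≤ k * n - 1 := by nlinarith
  set ρ := sinhCoshWeight ((k : ℝ) * n - 1) ((k : ℝ) - 1)
  set F := fun r => ρ r * (g₂' r * g₁ r - g₁' r * g₂ r)
  have hFderiv : ∀ r, 0 < r → HasDerivAt F (ρ r * ((lam1 - (lam2 - Λ r)) * (g₁ r * g₂ r))) r :=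
    fun r hr => hasDerivAt_weighted_wronskian (hH r hr ▸ hasDerivAt_sinhCoshWeight _ _ hr)
      (hg₁d r hr) (hg₁d' r hr) (hg₂d r hr) (hg₂d' r hr) (hg₁ode r hr) (hg₂ode r hr)
  have hΛanti : AntitoneOn Λ (Ioi 0) := fun r hr t ht hrt => by
    rw [hΛ r hr, hΛ t ht]
    exact antitoneOn_div_sinh_sq_sub_div_cosh_sq (by linarith) hab hr ht hrt
  have hFmono : StrictMonoOn F (Ioc 0 R) := by
    refine strictMonoOn_of_deriv_pos (convex_Ioc 0 R)
      (fun r hr => (hFderiv r hr.1).continuousAt.continuousWithinAt) fun r hr => ?_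
    rw [interior_Ioc] at hr
    have hΛr := hΛanti hr.1 (mem_Ioi.mpr hR) hr.2.le
    rw [(hFderiv r hr.1).deriv]
    have hgap_r : 0 < lam1 - (lam2 - Λ r) := by linarith
    exact mul_pos (sinhCoshWeight_pos _ _ hr.1)
      (mul_pos hgap_r (mul_pos (hg₁pos r hr) (hg₂pos r hr)))
  have hF0 : Tendsto F (𝓝[>] 0) (𝓝 0) := by
    have hρ := (tendsto_sinhCoshWeight_zero ha ((k : ℝ) - 1)).mono_left
      (nhdsWithin_le_nhds (s := Ioi 0))
    have hg₂0 := tendsto_zero_of_tendsto_div_self hg₂lim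
    simpa using hρ.mul ((hg₂'lim.mul hg₁lim).sub (hg₁'lim.mul hg₂0))
  simpa [F, hg₁R, hg₂R] using hFmono.pos_of_tendsto_nhdsGT_zero hR hF0

/-- λ₂ − λ₁ ≥ Λ(R): the gap between the first two Dirichlet eigenvalues
of a geodesic ball of radius R in 𝕂ℍⁿ is at least the first nonzero Laplace
eigenvalue Λ(R) of its boundary sphere. -/
theorem stmt_6
    (k n : ℕ) (hk : k = 2 ∨ k = 4 ∨ k = 8) (hn : 2 ≤ n) (hk8 : k = 8 → n = 2)
    (H : ℝ → ℝ)
    (hH : ∀ r : ℝ, 0 < r →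
      H r = ((k : ℝ) * n - 1) * (Real.cosh r / Real.sinh r) + ((k : ℝ) - 1) * Real.tanh r)
    (R lam1 : ℝ) (hR : 0 < R) (hlam1 : 0 < lam1)
    (g₁ g₁' g₁'' : ℝ → ℝ)
    (hg₁d : ∀ r : ℝ, 0 < r → HasDerivAt g₁ (g₁' r) r)
    (hg₁d' : ∀ r : ℝ, 0 < r → HasDerivAt g₁' (g₁'' r) r)
    (hg₁c : ContinuousOn g₁'' (Set.Ioi 0))
    (hg₁ode : ∀ r : ℝ, 0 < r → g₁'' r + H r * g₁' r + lam1 * g₁ r = 0)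
    (hg₁pos : ∀ r ∈ Set.Ioo (0 : ℝ) R, 0 < g₁ r)
    (hg₁R : g₁ R = 0)
    (hg₁lim : Filter.Tendsto g₁ (nhdsWithin 0 (Set.Ioi 0)) (nhds 1))
    (hg₁'lim : Filter.Tendsto g₁' (nhdsWithin 0 (Set.Ioi 0)) (nhds 0))
    (Λ : ℝ → ℝ)
    (hΛ : ∀ r : ℝ, 0 < r →
      Λ r = ((k : ℝ) * n - 1) / Real.sinh r ^ 2 - ((k : ℝ) - 1) / Real.cosh r ^ 2)
    (lam2 : ℝ)
    (g₂ g₂' g₂'' : ℝ → ℝ)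
    (hg₂d : ∀ r : ℝ, 0 < r → HasDerivAt g₂ (g₂' r) r)
    (hg₂d' : ∀ r : ℝ, 0 < r → HasDerivAt g₂' (g₂'' r) r)
    (hg₂c : ContinuousOn g₂'' (Set.Ioi 0))
    (hg₂ode : ∀ r : ℝ, 0 < r → g₂'' r + H r * g₂' r + (lam2 - Λ r) * g₂ r = 0)
    (hg₂pos : ∀ r ∈ Set.Ioo (0 : ℝ) R, 0 < g₂ r)
    (hg₂R : g₂ R = 0)
    (hg₂lim : Filter.Tendsto (fun r => g₂ r / r) (nhdsWithin 0 (Set.Ioi 0)) (nhds 1))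
    (hg₂'lim : Filter.Tendsto g₂' (nhdsWithin 0 (Set.Ioi 0)) (nhds 1))
    (hubar1 : ∃ v : ℝ → ℝ, ContDiffOn ℝ 1 v (Set.Icc 0 R) ∧
      (∀ r ∈ Set.Ioo (0 : ℝ) R,
        v r = Real.sinh r ^ (((k : ℝ) * n - 1) / 2) * Real.cosh r ^ (((k : ℝ) - 1) / 2) * g₁ r) ∧
      v 0 = 0 ∧ v R = 0)
    (hubar2 : ∃ v : ℝ → ℝ, ContDiffOn ℝ 1 v (Set.Icc 0 R) ∧
      (∀ r ∈ Set.Ioo (0 : ℝ) R,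
        v r = Real.sinh r ^ (((k : ℝ) * n - 1) / 2) * Real.cosh r ^ (((k : ℝ) - 1) / 2) * g₂ r) ∧
      v 0 = 0 ∧ v R = 0) :
    Λ R ≤ lam2 - lam1 :=
  stmt_6_general k n hk hn H hH R lam1 hR g₁ g₁' g₁'' hg₁d hg₁d' hg₁ode hg₁pos hg₁R hg₁lim hg₁'lim Λ
    hΛ lam2 g₂ g₂' g₂'' hg₂d hg₂d' hg₂ode hg₂pos hg₂R hg₂lim hg₂'lim
end

section
/- For every k ∈ {2,4,8}, every integer n ≥ 2, and every real r > 0, (kn−1)²·cosh⁴(r)·(2r(cosh(2r) + 2) − 3·sinh(2r)) > (k−1)²·sinh⁴(r)·(2r(cosh(2r) − 2) − 3·sinh(2r)). -/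
/-!
Write `A r = 2r(cosh 2r + 2) - 3 sinh 2r` and `B r = A r - 8r`. The heart of the matter is
`A r > 0` for `r > 0`: `A 0 = 0` and `A' r = 8 sinh r (r cosh r - sinh r)`, which is positive
because `sinh r < r cosh r` (again a function vanishing at `0` with positive derivative
`r sinh r`). Then `(k-1)² sinh⁴ r · B ≤ (k-1)² sinh⁴ r · A`, and the coefficient of `A` does not
decrease when `k - 1` becomes `kn - 1`, and increases when `sinh⁴ r` becomes `cosh⁴ r`.
-/

open Real

lemma pos_of_hasDerivAt_of_pos {f f' : ℝ → ℝ} (hf : ∀ x, HasDerivAt f (f' x) x)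
    (hf' : ∀ x, 0 < x → 0 < f' x) (h₀ : f 0 = 0) {r : ℝ} (hr : 0 < r) : 0 < f r := by
  have hmono : StrictMonoOn f (Set.Ici 0) :=
    strictMonoOn_of_hasDerivWithinAt_pos (convex_Ici 0)
      (fun x _ ↦ (hf x).continuousAt.continuousWithinAt)
      (fun x _ ↦ (hf x).hasDerivWithinAt)
      (fun x hx ↦ hf' x (by simpa using hx))
  simpa [h₀] using hmono Set.self_mem_Ici hr.le hr

lemma sinh_lt_mul_cosh {x : ℝ} (hx : 0 < x) : sinh x < x * cosh x := by
  have hderiv (y : ℝ) : HasDerivAt (fun y ↦ y * cosh y - sinh y) (y * sinh y) y :=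
    (((hasDerivAt_id y).mul (hasDerivAt_cosh y)).sub (hasDerivAt_sinh y)).congr_deriv
      (by simp)
  have hpos := pos_of_hasDerivAt_of_pos hderiv (fun y hy ↦ mul_pos hy (sinh_pos_iff.2 hy))
    (by simp) hx
  exact sub_pos.1 hpos

lemma two_mul_mul_cosh_two_mul_add_two_sub_pos {r : ℝ} (hr : 0 < r) :
    0 < 2 * r * (cosh (2 * r) + 2) - 3 * sinh (2 * r) := by
  have hderiv (y : ℝ) : HasDerivAt (fun y ↦ 2 * y * (cosh (2 * y) + 2) - 3 * sinh (2 * y))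
      (8 * sinh y * (y * cosh y - sinh y)) y := by
    have h2y : HasDerivAt (fun y : ℝ ↦ 2 * y) 2 y := by simpa using (hasDerivAt_id y).const_mul 2
    refine ((h2y.mul (h2y.cosh.add_const 2)).sub (h2y.sinh.const_mul 3)).congr_deriv ?_
    rw [sinh_two_mul, cosh_two_mul, cosh_sq]
    ring
  exact pos_of_hasDerivAt_of_pos hderiv
    (fun y hy ↦ mul_pos (mul_pos (by norm_num) (sinh_pos_iff.2 hy))
      (sub_pos.2 (sinh_lt_mul_cosh hy)))
    (by simp) hr

lemma sinh_pow_four_lt_cosh_pow_four (x : ℝ) : sinh x ^ 4 < cosh x ^ 4 := by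
  have hsq : sinh x ^ 2 < cosh x ^ 2 := by rw [cosh_sq]; linarith
  simpa [← pow_mul] using pow_lt_pow_left₀ hsq (sq_nonneg _) two_ne_zero

lemma natCast_sub_one_sq_le_mul_sub_one_sq (k : ℕ) {n : ℕ} (hn : 1 ≤ n) :
    ((k : ℝ) - 1) ^ 2 ≤ ((k : ℝ) * n - 1) ^ 2 := by
  rcases Nat.eq_zero_or_pos k with rfl | hk
  · simp
  have hk' : (1 : ℝ) ≤ k := by exact_mod_cast hk
  have hn' : (1 : ℝ) ≤ n := by exact_mod_cast hn
  exact pow_le_pow_left₀ (by linarith) (by nlinarith) 2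

lemma natCast_mul_sub_one_sq_pos (k : ℕ) {n : ℕ} (hn : 2 ≤ n) : 0 < ((k : ℝ) * n - 1) ^ 2 := by
  have hkn : k * n ≠ 1 := fun h ↦ by have := Nat.eq_one_of_mul_eq_one_left h; omega
  have : (k : ℝ) * n - 1 ≠ 0 := sub_ne_zero.2 (by exact_mod_cast hkn)
  positivity

theorem stmt_19_general (k n : ℕ) (hn : 2 ≤ n) (r : ℝ) (hr : 0 < r) :
    ((k : ℝ) - 1) ^ 2 * Real.sinh r ^ 4 * (2 * r * (Real.cosh (2 * r) - 2) - 3 * Real.sinh (2 * r))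
      < ((k : ℝ) * n - 1) ^ 2 * Real.cosh r ^ 4 *
        (2 * r * (Real.cosh (2 * r) + 2) - 3 * Real.sinh (2 * r)) := by
  have hA := two_mul_mul_cosh_two_mul_add_two_sub_pos hr
  calc ((k : ℝ) - 1) ^ 2 * sinh r ^ 4 * (2 * r * (cosh (2 * r) - 2) - 3 * sinh (2 * r))
      ≤ ((k : ℝ) - 1) ^ 2 * sinh r ^ 4 * (2 * r * (cosh (2 * r) + 2) - 3 * sinh (2 * r)) :=
        mul_le_mul_of_nonneg_left (by linarith) (by positivity)
    _ ≤ ((k : ℝ) * n - 1) ^ 2 * sinh r ^ 4 * (2 * r * (cosh (2 * r) + 2) - 3 * sinh (2 * r)) :=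
        mul_le_mul_of_nonneg_right (mul_le_mul_of_nonneg_right
          (natCast_sub_one_sq_le_mul_sub_one_sq k (by omega)) (by positivity)) hA.le
    _ < ((k : ℝ) * n - 1) ^ 2 * cosh r ^ 4 * (2 * r * (cosh (2 * r) + 2) - 3 * sinh (2 * r)) :=
        mul_lt_mul_of_pos_right (mul_lt_mul_of_pos_left (sinh_pow_four_lt_cosh_pow_four r)
          (natCast_mul_sub_one_sq_pos k hn)) hA

/-- For every k ∈ {2,4,8}, every integer n ≥ 2, and every real r > 0,
(kn−1)²·cosh⁴(r)·(2r(cosh(2r) + 2) − 3·sinh(2r)) >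
(k−1)²·sinh⁴(r)·(2r(cosh(2r) − 2) − 3·sinh(2r)). -/
theorem stmt_19 (k n : ℕ) (hk : k = 2 ∨ k = 4 ∨ k = 8) (hn : 2 ≤ n) (r : ℝ) (hr : 0 < r) :
    ((k : ℝ) - 1) ^ 2 * Real.sinh r ^ 4 * (2 * r * (Real.cosh (2 * r) - 2) - 3 * Real.sinh (2 * r))
      < ((k : ℝ) * n - 1) ^ 2 * Real.cosh r ^ 4 *
        (2 * r * (Real.cosh (2 * r) + 2) - 3 * Real.sinh (2 * r)) :=
  stmt_19_general k n hn r hr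
end
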